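/- (Lemma 7) Fix costs c_i and qualities q_i, let B ≥ 1 and ρ ∈ [0,1]. Let (O, p^OPT) be an optimal solution to the joint sequencing and pricing problem, i.e., O is a duplicate-free list with |O| ≤ B and f(O, p^OPT) ≥ f(L, p) for every duplicate-free list L with |L| ≤ B and every price vector p; assume p^OPT_i ≥ c_i for all i. Then there exists a duplicate-free list Q with |Q| ≤ B such that every position t of Q has reachability Θ_t = Π_{j<t} θ_{q_j} ≥ ρ and f(Q, p^OPT) ≥ (1 − ρ) f(O, p^OPT). Moreover Q can be taken to be a prefix of O. -/
import Mathlib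


/-- MNL expected revenue of a finite set `S` of products, where product `i`
has revenue `α i` and preference weight `β i`. -/
noncomputable def g (α β : ℕ → ℝ) (S : Finset ℕ) : ℝ :=
  (∑ i ∈ S, α i * β i) / ((∑ i ∈ S, β i) + 1)

/-- Reachability of (0-based) position `t` of the sequence `S` under the
cascade browse model: the product of the continuation probabilities of all
earlier products. -/
noncomputable def reach (θ : ℕ → ℝ) (S : List ℕ) (t : ℕ) : ℝ :=
  ∏ j ∈ Finset.range t, θ (S.getD j 0)

/-- Expected revenue of a sequence of products `S` under the cascade browse
model combined with the MNL choice model. -/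
noncomputable def f (α β θ : ℕ → ℝ) (S : List ℕ) : ℝ :=
  (∑ t ∈ Finset.range (S.length - 1),
      reach θ S t * (1 - θ (S.getD t 0)) * g α β (S.take (t + 1)).toFinset)
    + reach θ S (S.length - 1) * g α β S.toFinset
/-- MNL expected revenue of a finite set `S` of products at prices `p`, where
product `i` has quality `q i` and cost `c i`. -/
noncomputable def gp (q c p : ℕ → ℝ) (S : Finset ℕ) : ℝ :=
  (∑ i ∈ S, (p i - c i) * Real.exp (q i - p i)) /
    ((∑ i ∈ S, Real.exp (q i - p i)) + 1)

/-- Expected revenue of a sequence of products `S` at prices `p` under the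
cascade browse model combined with the MNL choice model. -/
noncomputable def fp (q c θ p : ℕ → ℝ) (S : List ℕ) : ℝ :=
  (∑ t ∈ Finset.range (S.length - 1),
      reach θ S t * (1 - θ (S.getD t 0)) * gp q c p (S.take (t + 1)).toFinset)
    + reach θ S (S.length - 1) * gp q c p S.toFinset

section helpers
variable {q c θ p : ℕ → ℝ}

lemma getD_take_eq (L : List ℕ) {j m : ℕ} (h : j < m) : (L.take m).getD j 0 = L.getD j 0 := by
  simp [List.getD_eq_getElem?_getD, List.getElem?_take_of_lt h]

lemma getD_drop_eq (L : List ℕ) (m j : ℕ) : (L.drop m).getD j 0 = L.getD (m + j) 0 := by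
  simp [List.getD_eq_getElem?_getD, List.getElem?_drop]

lemma reach_take {L : List ℕ} {m t : ℕ} (h : t ≤ m) :
    reach θ (L.take m) t = reach θ L t :=
  Finset.prod_congr rfl fun j hj => by
    rw [getD_take_eq L (lt_of_lt_of_le (Finset.mem_range.1 hj) h)]

lemma reach_succ (L : List ℕ) (t : ℕ) :
    reach θ L (t + 1) = reach θ L t * θ (L.getD t 0) := Finset.prod_range_succ _ _

lemma reach_nonneg (hθ : ∀ i, 0 ≤ θ i ∧ θ i ≤ 1) (L : List ℕ) (t : ℕ) :
    0 ≤ reach θ L t := Finset.prod_nonneg fun j _ => (hθ _).1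

lemma reach_add (L : List ℕ) (m t : ℕ) :
    reach θ L (m + t) = reach θ L m * reach θ (L.drop m) t := by
  unfold reach
  rw [Finset.prod_range_add]
  exact congrArg _ (Finset.prod_congr rfl fun j _ => by rw [getD_drop_eq])

lemma gp_nonneg (hp : ∀ i, c i ≤ p i) (S : Finset ℕ) : 0 ≤ gp q c p S := by
  apply div_nonneg
  · exact Finset.sum_nonneg fun i _ => mul_nonneg (by linarith [hp i]) (Real.exp_pos _).le
  · have := Finset.sum_nonneg (s := S) fun i _ => (Real.exp_pos (q i - p i)).le
    linarith

lemma gp_empty : gp q c p ∅ = 0 := by simp [gp]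

lemma gp_union_le (hp : ∀ i, c i ≤ p i) {S T : Finset ℕ} (h : Disjoint S T) :
    gp q c p (S ∪ T) ≤ gp q c p S + gp q c p T := by
  unfold gp
  rw [Finset.sum_union h, Finset.sum_union h]
  have ha : 0 ≤ ∑ i ∈ S, (p i - c i) * Real.exp (q i - p i) :=
    Finset.sum_nonneg fun i _ => mul_nonneg (by linarith [hp i]) (Real.exp_pos _).le
  have hb : 0 ≤ ∑ i ∈ T, (p i - c i) * Real.exp (q i - p i) :=
    Finset.sum_nonneg fun i _ => mul_nonneg (by linarith [hp i]) (Real.exp_pos _).le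
  have hsS : 0 ≤ ∑ i ∈ S, Real.exp (q i - p i) :=
    Finset.sum_nonneg fun i _ => (Real.exp_pos _).le
  have hsT : 0 ≤ ∑ i ∈ T, Real.exp (q i - p i) :=
    Finset.sum_nonneg fun i _ => (Real.exp_pos _).le
  rw [add_div]
  gcongr <;> linarith

lemma fp_nil : fp q c θ p [] = 0 := by simp [fp, reach, gp]

end helpers

/-- weight of position `t`. -/
noncomputable def Wf (θ : ℕ → ℝ) (L : List ℕ) (t : ℕ) : ℝ :=
  reach θ L t * (1 - θ (L.getD t 0))

/-- revenue of the `j`-th prefix set. -/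
noncomputable def Gf (q c p : ℕ → ℝ) (L : List ℕ) (j : ℕ) : ℝ :=
  gp q c p (L.take j).toFinset

lemma fp_eq (q c θ p : ℕ → ℝ) (L : List ℕ) :
    fp q c θ p L = (∑ t ∈ Finset.range (L.length - 1), Wf θ L t * Gf q c p L (t + 1))
      + reach θ L (L.length - 1) * Gf q c p L L.length := by
  unfold fp Wf Gf
  rw [List.take_length]

lemma Gf_take {q c p : ℕ → ℝ} (L : List ℕ) {j m : ℕ} (h : j ≤ m) :
    Gf q c p (L.take m) j = Gf q c p L j := by
  unfold Gf
  rw [List.take_take, min_eq_left h]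

lemma Wf_take {θ : ℕ → ℝ} (L : List ℕ) {t m : ℕ} (h : t < m) :
    Wf θ (L.take m) t = Wf θ L t := by
  unfold Wf
  rw [reach_take (le_of_lt h), getD_take_eq L h]

lemma Wf_nonneg {θ : ℕ → ℝ} (hθ : ∀ i, 0 ≤ θ i ∧ θ i ≤ 1) (L : List ℕ) (t : ℕ) :
    0 ≤ Wf θ L t :=
  mul_nonneg (reach_nonneg hθ L t) (by linarith [(hθ (L.getD t 0)).2])

lemma key (q c θ p : ℕ → ℝ) (hθ : ∀ i, 0 ≤ θ i ∧ θ i ≤ 1) (hp : ∀ i, c i ≤ p i)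
    (L : List ℕ) (hL : L.Nodup) (m : ℕ) (hm1 : 1 ≤ m) (hmk : m < L.length) :
    fp q c θ p L ≤ fp q c θ p (L.take m) + reach θ L m * fp q c θ p (L.drop m) := by
  have hn1 : 1 ≤ L.length - m := by omega
  have hlenm : (L.take m).length = m := by rw [List.length_take]; omega
  -- expression for fp (L.take m)
  have hFQ : fp q c θ p (L.take m)
      = (∑ t ∈ Finset.range (m - 1), Wf θ L t * Gf q c p L (t + 1))
        + reach θ L (m - 1) * Gf q c p L m := by
    rw [fp_eq, hlenm]
    congr 1
    · refine Finset.sum_congr rfl fun t ht => ?_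
      have htm : t < m - 1 := Finset.mem_range.1 ht
      rw [Wf_take L (by omega), Gf_take L (by omega)]
    · rw [reach_take (by omega), Gf_take L le_rfl]
  -- expression for reach θ L m * fp (L.drop m)
  have hFD : reach θ L m * fp q c θ p (L.drop m)
      = (∑ t ∈ Finset.range (L.length - m - 1),
          reach θ L (m + t) * (1 - θ (L.getD (m + t) 0)) * Gf q c p (L.drop m) (t + 1))
        + reach θ L (L.length - 1) * Gf q c p (L.drop m) (L.length - m) := by
    rw [fp_eq, List.length_drop, mul_add, Finset.mul_sum]
    congr 1
    · refine Finset.sum_congr rfl fun t ht => ?_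
      unfold Wf
      rw [getD_drop_eq, ← mul_assoc, ← mul_assoc, ← reach_add]
    · rw [← mul_assoc, ← reach_add, show m + (L.length - m - 1) = L.length - 1 from by omega]
  rw [fp_eq q c θ p L, hFQ, hFD]
  -- split the big sum
  have hsplit : (∑ t ∈ Finset.range (L.length - 1), Wf θ L t * Gf q c p L (t + 1))
      = (∑ t ∈ Finset.range (m - 1), Wf θ L t * Gf q c p L (t + 1))
        + ∑ t ∈ Finset.range (L.length - m), Wf θ L (m - 1 + t) * Gf q c p L (m + t) := by
    rw [show L.length - 1 = (m - 1) + (L.length - m) from by omega, Finset.sum_range_add]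
    congr 1
    exact Finset.sum_congr rfl fun t _ => by rw [show m - 1 + t + 1 = m + t from by omega]
  rw [hsplit]
  -- subadditivity bound
  have hGH : ∀ t, Gf q c p L (m + t) ≤ Gf q c p L m + Gf q c p (L.drop m) t := by
    intro t
    have hunion : (L.take (m + t)).toFinset
        = (L.take m).toFinset ∪ ((L.drop m).take t).toFinset := by
      rw [List.take_add, List.toFinset_append]
    have hnd : (L.take m ++ L.drop m).Nodup := by rw [List.take_append_drop]; exact hL
    have hdisj := List.disjoint_of_nodup_append hnd
    have hdisjF : Disjoint (L.take m).toFinset ((L.drop m).take t).toFinset := by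
      rw [Finset.disjoint_left]
      intro a ha hb
      exact hdisj (List.mem_toFinset.1 ha) (List.mem_of_mem_take (List.mem_toFinset.1 hb))
    unfold Gf
    rw [hunion]
    exact gp_union_le hp hdisjF
  -- telescoping sum of weights
  have hT : (∑ t ∈ Finset.range (L.length - m), Wf θ L (m - 1 + t))
      = reach θ L (m - 1) - reach θ L (L.length - 1) := by
    calc (∑ t ∈ Finset.range (L.length - m), Wf θ L (m - 1 + t))
        = ∑ t ∈ Finset.range (L.length - m),
            ((fun s => reach θ L (m - 1 + s)) t - (fun s => reach θ L (m - 1 + s)) (t + 1)) := by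
          refine Finset.sum_congr rfl fun t _ => ?_
          simp only []
          rw [show m - 1 + (t + 1) = (m - 1 + t) + 1 from by omega, reach_succ]
          unfold Wf
          ring
      _ = reach θ L (m - 1 + 0) - reach θ L (m - 1 + (L.length - m)) :=
          Finset.sum_range_sub' _ _
      _ = reach θ L (m - 1) - reach θ L (L.length - 1) := by
          rw [show m - 1 + 0 = m - 1 from by omega,
            show m - 1 + (L.length - m) = L.length - 1 from by omega]
  -- shifted sum
  have hH0 : Gf q c p (L.drop m) 0 = 0 := by
    unfold Gf
    simp only [List.take_zero, List.toFinset_nil]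
    exact gp_empty
  have hS : (∑ t ∈ Finset.range (L.length - m), Wf θ L (m - 1 + t) * Gf q c p (L.drop m) t)
      = ∑ t ∈ Finset.range (L.length - m - 1),
          reach θ L (m + t) * (1 - θ (L.getD (m + t) 0)) * Gf q c p (L.drop m) (t + 1) := by
    rw [show L.length - m = (L.length - m - 1) + 1 from by omega, Finset.sum_range_succ']
    rw [show m - 1 + 0 = m - 1 from by omega, hH0, mul_zero, add_zero]
    refine Finset.sum_congr rfl fun t _ => ?_
    rw [show m - 1 + (t + 1) = m + t from by omega]
    rfl
  -- final estimate
  have hbound : (∑ t ∈ Finset.range (L.length - m), Wf θ L (m - 1 + t) * Gf q c p L (m + t))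
        + reach θ L (L.length - 1) * Gf q c p L L.length
      ≤ (∑ t ∈ Finset.range (L.length - m),
            Wf θ L (m - 1 + t) * (Gf q c p L m + Gf q c p (L.drop m) t))
        + reach θ L (L.length - 1) * (Gf q c p L m + Gf q c p (L.drop m) (L.length - m)) := by
    refine add_le_add (Finset.sum_le_sum fun t _ =>
      mul_le_mul_of_nonneg_left (hGH t) (Wf_nonneg hθ L _)) ?_
    refine mul_le_mul_of_nonneg_left ?_ (reach_nonneg hθ L _)
    calc Gf q c p L L.length = Gf q c p L (m + (L.length - m)) := by
          rw [show m + (L.length - m) = L.length from by omega]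
      _ ≤ _ := hGH (L.length - m)
  have hexpand : (∑ t ∈ Finset.range (L.length - m),
        Wf θ L (m - 1 + t) * (Gf q c p L m + Gf q c p (L.drop m) t))
      = (∑ t ∈ Finset.range (L.length - m), Wf θ L (m - 1 + t)) * Gf q c p L m
        + ∑ t ∈ Finset.range (L.length - m), Wf θ L (m - 1 + t) * Gf q c p (L.drop m) t := by
    rw [Finset.sum_mul, ← Finset.sum_add_distrib]
    exact Finset.sum_congr rfl fun t _ => by ring
  rw [hexpand, hT, hS] at hbound
  linarith [hbound]

/-- Lemma 7: pricing analogue of Lemma 1. -/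
theorem stmt15 (q c θ : ℕ → ℝ) (hθ : ∀ i, 0 ≤ θ i ∧ θ i ≤ 1)
    (B : ℕ) (hB : 1 ≤ B) (ρ : ℝ) (hρ0 : 0 ≤ ρ) (hρ1 : ρ ≤ 1)
    (O : List ℕ) (pOPT : ℕ → ℝ) (hO : O.Nodup) (hOB : O.length ≤ B)
    (hp : ∀ i, c i ≤ pOPT i)
    (hopt : ∀ (L : List ℕ) (p : ℕ → ℝ), L.Nodup → L.length ≤ B →
        fp q c θ p L ≤ fp q c θ pOPT O) :
    ∃ Q : List ℕ, Q <+: O ∧ Q.Nodup ∧ Q.length ≤ B ∧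
      (∀ t < Q.length, ρ ≤ reach θ Q t) ∧
      (1 - ρ) * fp q c θ pOPT O ≤ fp q c θ pOPT Q := by
  classical
  have hF0 : 0 ≤ fp q c θ pOPT O := by
    have h := hopt [] pOPT List.nodup_nil (by simp)
    rwa [fp_nil] at h
  by_cases hex : ∃ t, t < O.length ∧ reach θ O t < ρ
  · set m := Nat.find hex with hmdef
    have hm := Nat.find_spec hex
    rw [← hmdef] at hm
    have hmin : ∀ t, t < m → ¬(t < O.length ∧ reach θ O t < ρ) :=
      fun t ht => Nat.find_min hex ht
    have hm1 : 1 ≤ m := by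
      rcases Nat.eq_zero_or_pos m with h0 | h1
      · exfalso
        rw [h0] at hm
        have : reach θ O 0 = 1 := by simp [reach]
        rw [this] at hm
        linarith [hm.2]
      · exact h1
    refine ⟨O.take m, List.take_prefix m O, (List.take_sublist m O).nodup hO, ?_, ?_, ?_⟩
    · rw [List.length_take]; omega
    · intro t ht
      rw [List.length_take] at ht
      have htm : t < m := lt_of_lt_of_le ht (min_le_left _ _)
      rw [reach_take (le_of_lt htm)]
      have := hmin t htm
      push_neg at this
      exact this (by omega)
    · have hkey := key q c θ pOPT hθ hp O hO m hm1 hm.1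
      have hD : fp q c θ pOPT (O.drop m) ≤ fp q c θ pOPT O :=
        hopt _ pOPT ((List.drop_sublist m O).nodup hO)
          (le_trans (by rw [List.length_drop]; omega) hOB)
      have hRm0 : 0 ≤ reach θ O m := reach_nonneg hθ O m
      have hRmρ : reach θ O m ≤ ρ := le_of_lt hm.2
      have h1 : reach θ O m * fp q c θ pOPT (O.drop m) ≤ reach θ O m * fp q c θ pOPT O :=
        mul_le_mul_of_nonneg_left hD hRm0
      have h2 : reach θ O m * fp q c θ pOPT O ≤ ρ * fp q c θ pOPT O :=
        mul_le_mul_of_nonneg_right hRmρ hF0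
      have h3 : (1 - ρ) * fp q c θ pOPT O
          = fp q c θ pOPT O - ρ * fp q c θ pOPT O := by ring
      linarith
  · refine ⟨O, List.prefix_refl O, hO, hOB, ?_, ?_⟩
    · intro t ht
      push_neg at hex
      exact hex t ht
    · nlinarith [mul_nonneg hρ0 hF0]
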